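/- Let A₁, A₂, Ã₁, Ã₂ ∈ ℝ^{m×n} be entrywise nonnegative with Ã₁ ⊵_ε A₁ and Ã₂ ⊵_ε A₂. Then the horizontal concatenation [Ã₁ Ã₂] ∈ ℝ^{m×(n+n)} satisfies [Ã₁ Ã₂] ⊵_ε [A₁ A₂]. -/

import Mathlib

open Matrix ComplexOrder

/-- Row-sum degree matrix of `A`. -/
def rowDeg {α β : Type*} [Fintype α] [Fintype β] [DecidableEq α]
    (A : Matrix α β ℝ) : Matrix α α ℝ :=
  Matrix.diagonal fun i => ∑ j, A i j

/-- Column-sum degree matrix of `A`. -/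
def colDeg {α β : Type*} [Fintype α] [Fintype β] [DecidableEq β]
    (A : Matrix α β ℝ) : Matrix β β ℝ :=
  Matrix.diagonal fun j => ∑ i, A i j

/-- The error matrix `E := D_row − A · D_col⁻ · Aᵀ` (with `0⁻¹ = 0`). -/
noncomputable def errE {α β : Type*} [Fintype α] [Fintype β] [DecidableEq α] [DecidableEq β]
    (A : Matrix α β ℝ) : Matrix α α ℝ :=
  rowDeg A - A * Matrix.diagonal (fun j => (∑ i, A i j)⁻¹) * Aᵀ

/-- The error matrix `F := D_col − Aᵀ · D_row⁻ · A` (with `0⁻¹ = 0`). -/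
noncomputable def errF {α β : Type*} [Fintype α] [Fintype β] [DecidableEq α] [DecidableEq β]
    (A : Matrix α β ℝ) : Matrix β β ℝ :=
  colDeg A - Aᵀ * Matrix.diagonal (fun i => (∑ j, A i j)⁻¹) * A

/-- `Ã ⊵_ε A`: `Ã` is an `ε`-SV approximation of the entrywise-nonnegative matrix `A`,
with degree matrices given by the row and column sums of `A` (real matrices viewed as
complex for the bilinear-form inequality). -/
noncomputable def IsSVgApprox {α β : Type*} [Fintype α] [Fintype β] [DecidableEq α]
    [DecidableEq β] (ε : ℝ) (A Atil : Matrix α β ℝ) : Prop :=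
  (errE A).PosSemidef ∧ (errF A).PosSemidef ∧
  ∀ (x : α → ℂ) (y : β → ℂ),
    ‖star x ⬝ᵥ ((Atil - A).map fun a => (a : ℂ)).mulVec y‖ ≤
      ε / 4 * ((star x ⬝ᵥ ((errE A).map fun a => (a : ℂ)).mulVec x).re +
        (star y ⬝ᵥ ((errF A).map fun a => (a : ℂ)).mulVec y).re)

/-!
Under column concatenation the error matrix `E` is additive, while the form `Re y* F y` can
only grow: its degree part splits exactly over the two column blocks, and in its row part
`‖u + v‖² / (d₁ + d₂) ≤ ‖u‖² / d₁ + ‖v‖² / d₂` (Sedrakyan's inequality, after the triangle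
inequality) holds row by row, the row sums of `[A₁ A₂]` being `d₁ + d₂`. Adding the bounds for
`(x, y ∘ inl)` and `(x, y ∘ inr)` then gives the bound for `(x, y)`; positive semidefiniteness
of the real matrix `F` is the same inequality at real vectors.
-/

theorem inv_add_mul_add_sq_le {d₁ d₂ : ℝ} (hd₁ : 0 < d₁) (hd₂ : 0 < d₂) (a b : ℝ) :
    (d₁ + d₂)⁻¹ * (a + b) ^ 2 ≤ d₁⁻¹ * a ^ 2 + d₂⁻¹ * b ^ 2 := by
  have := Finset.sq_sum_div_le_sum_sq_div Finset.univ ![a, b] (g := ![d₁, d₂])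
    (by simp [Fin.forall_fin_two, hd₁, hd₂])
  simpa [Fin.sum_univ_two, div_eq_inv_mul] using this

theorem inv_add_mul_norm_add_sq_le {E : Type*} [SeminormedAddGroup E] {d₁ d₂ : ℝ}
    (hd₁ : 0 ≤ d₁) (hd₂ : 0 ≤ d₂) {u v : E} (hu : d₁ = 0 → u = 0) (hv : d₂ = 0 → v = 0) :
    (d₁ + d₂)⁻¹ * ‖u + v‖ ^ 2 ≤ d₁⁻¹ * ‖u‖ ^ 2 + d₂⁻¹ * ‖v‖ ^ 2 := by
  rcases hd₁.eq_or_lt with rfl | hd₁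
  · simp [hu rfl]
  rcases hd₂.eq_or_lt with rfl | hd₂
  · simp [hv rfl]
  calc (d₁ + d₂)⁻¹ * ‖u + v‖ ^ 2 ≤ (d₁ + d₂)⁻¹ * (‖u‖ + ‖v‖) ^ 2 := by
        gcongr; exact norm_add_le u v
    _ ≤ d₁⁻¹ * ‖u‖ ^ 2 + d₂⁻¹ * ‖v‖ ^ 2 := inv_add_mul_add_sq_le hd₁ hd₂ _ _

section Complexification

variable {ι κ : Type*}

theorem star_dotProduct_conjTranspose_mul_mul_mulVec [Fintype ι] [Fintype κ] (B : Matrix κ ι ℂ) (M : Matrix κ κ ℂ)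
    (y : ι → ℂ) : star y ⬝ᵥ (Bᴴ * M * B) *ᵥ y = star (B *ᵥ y) ⬝ᵥ M *ᵥ (B *ᵥ y) := by
  rw [← mulVec_mulVec, ← mulVec_mulVec, dotProduct_mulVec, star_mulVec]

theorem star_dotProduct_diagonal_mulVec [Fintype ι] [DecidableEq ι] (d : ι → ℝ) (z : ι → ℂ) :
    star z ⬝ᵥ diagonal (fun i => (d i : ℂ)) *ᵥ z = ((∑ i, d i * ‖z i‖ ^ 2 : ℝ) : ℂ) := by
  simp only [dotProduct, mulVec_diagonal, Pi.star_apply, Complex.star_def]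
  push_cast
  refine Finset.sum_congr rfl fun i _ => ?_
  rw [mul_left_comm, Complex.conj_mul']

noncomputable def hermForm [Fintype ι] (M : Matrix ι ι ℝ) (x : ι → ℂ) : ℝ :=
  (star x ⬝ᵥ (M.map fun a => (a : ℂ)) *ᵥ x).re

theorem hermForm_add [Fintype ι] (M N : Matrix ι ι ℝ) (x : ι → ℂ) :
    hermForm (M + N) x = hermForm M x + hermForm N x := by
  simp [hermForm, Matrix.map_add, add_mulVec]

theorem dotProduct_mulVec_eq_hermForm [Fintype ι] (M : Matrix ι ι ℝ) (x : ι → ℝ) :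
    x ⬝ᵥ M *ᵥ x = hermForm M (fun i => (x i : ℂ)) := by
  simp [hermForm, dotProduct, mulVec, Complex.re_sum]

theorem map_ofReal_diagonal_sub_transpose_mul_diagonal_mul [Fintype κ] [DecidableEq ι]
    [DecidableEq κ]
    (A : Matrix κ ι ℝ) (d : ι → ℝ) (e : κ → ℝ) :
    (diagonal d - Aᵀ * diagonal e * A).map (fun a => (a : ℂ)) =
      diagonal (fun j => (d j : ℂ)) -
        (A.map fun a => (a : ℂ))ᴴ * diagonal (fun i => (e i : ℂ)) * A.map fun a => (a : ℂ) := by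
  have hT : (A.map fun a => (a : ℂ))ᴴ = Aᵀ.map fun a => (a : ℂ) := by ext; simp
  rw [hT, show (fun a : ℝ => (a : ℂ)) = Complex.ofRealHom from rfl,
    Matrix.map_sub _ (map_sub _), Matrix.map_mul, Matrix.map_mul, diagonal_map (map_zero _),
    diagonal_map (map_zero _)]
  rfl

theorem mulVec_apply_eq_zero_of_sum_eq_zero [Fintype ι] {A : Matrix κ ι ℝ} (hA : ∀ i j, 0 ≤ A i j)
    (y : ι → ℂ) {i : κ} (h : ∑ j, A i j = 0) : ((A.map fun a => (a : ℂ)) *ᵥ y) i = 0 := by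
  have hrow := (Finset.sum_eq_zero_iff_of_nonneg fun j _ => hA i j).mp h
  simp [mulVec, dotProduct, hrow]

end Complexification

section Concatenation

variable {α β : Type*} [Fintype α] [Fintype β] [DecidableEq α] [DecidableEq β]

theorem hermForm_errF (A : Matrix α β ℝ) (y : β → ℂ) :
    hermForm (errF A) y = ∑ j, (∑ i, A i j) * ‖y j‖ ^ 2 -
      ∑ i, (∑ j, A i j)⁻¹ * ‖((A.map fun a => (a : ℂ)) *ᵥ y) i‖ ^ 2 := by
  rw [hermForm, errF, colDeg, map_ofReal_diagonal_sub_transpose_mul_diagonal_mul, sub_mulVec,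
    dotProduct_sub, star_dotProduct_conjTranspose_mul_mul_mulVec, star_dotProduct_diagonal_mulVec,
    star_dotProduct_diagonal_mulVec, ← Complex.ofReal_sub, Complex.ofReal_re]

theorem errF_isHermitian (A : Matrix α β ℝ) : (errF A).IsHermitian :=
  (isHermitian_diagonal _).sub <| by
    simpa [conjTranspose_eq_transpose_of_trivial] using
      isHermitian_conjTranspose_mul_mul A (isHermitian_diagonal fun i => (∑ j, A i j)⁻¹)

theorem errE_fromCols (A₁ A₂ : Matrix α β ℝ) :
    errE (fromCols A₁ A₂) = errE A₁ + errE A₂ := by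
  ext i k
  simp only [errE, rowDeg, Fintype.sum_sum_type, fromCols_apply_inl, fromCols_apply_inr,
    Matrix.sub_apply, Matrix.add_apply, diagonal_apply, mul_apply, transpose_apply, mul_ite,
    mul_zero, Finset.sum_ite_eq', Finset.mem_univ, ↓reduceIte]
  split_ifs <;> ring

theorem hermForm_errF_add_le_fromCols {A₁ A₂ : Matrix α β ℝ} (hA₁ : ∀ i j, 0 ≤ A₁ i j)
    (hA₂ : ∀ i j, 0 ≤ A₂ i j) (y : β ⊕ β → ℂ) :
    hermForm (errF A₁) (y ∘ Sum.inl) + hermForm (errF A₂) (y ∘ Sum.inr) ≤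
      hermForm (errF (fromCols A₁ A₂)) y := by
  have hcol : ∑ j, (∑ i, fromCols A₁ A₂ i j) * ‖y j‖ ^ 2 =
      ∑ j, (∑ i, A₁ i j) * ‖(y ∘ Sum.inl) j‖ ^ 2 +
        ∑ j, (∑ i, A₂ i j) * ‖(y ∘ Sum.inr) j‖ ^ 2 := by
    simp [Fintype.sum_sum_type]
  have hrow : ∑ i, (∑ j, fromCols A₁ A₂ i j)⁻¹ *
        ‖(((fromCols A₁ A₂).map fun a => (a : ℂ)) *ᵥ y) i‖ ^ 2 ≤
      ∑ i, (∑ j, A₁ i j)⁻¹ * ‖((A₁.map fun a => (a : ℂ)) *ᵥ (y ∘ Sum.inl)) i‖ ^ 2 +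
        ∑ i, (∑ j, A₂ i j)⁻¹ * ‖((A₂.map fun a => (a : ℂ)) *ᵥ (y ∘ Sum.inr)) i‖ ^ 2 := by
    rw [← Finset.sum_add_distrib]
    gcongr with i
    rw [Fintype.sum_sum_type, fromCols_map, fromCols_mulVec]
    simp only [fromCols_apply_inl, fromCols_apply_inr, Pi.add_apply]
    exact inv_add_mul_norm_add_sq_le (Finset.sum_nonneg fun j _ => hA₁ i j)
      (Finset.sum_nonneg fun j _ => hA₂ i j) (mulVec_apply_eq_zero_of_sum_eq_zero hA₁ _)
      (mulVec_apply_eq_zero_of_sum_eq_zero hA₂ _)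
  rw [hermForm_errF, hermForm_errF, hermForm_errF, hcol]
  linarith

end Concatenation

theorem stmt_14_general {m n : ℕ} (A₁ A₂ Atil₁ Atil₂ : Matrix (Fin m) (Fin n) ℝ)
    (hA₁ : ∀ i j, 0 ≤ A₁ i j) (hA₂ : ∀ i j, 0 ≤ A₂ i j)
    (ε : ℝ) (hε : 0 ≤ ε)
    (h₁ : IsSVgApprox ε A₁ Atil₁) (h₂ : IsSVgApprox ε A₂ Atil₂) :
    IsSVgApprox ε (Matrix.fromCols A₁ A₂) (Matrix.fromCols Atil₁ Atil₂) := by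
  obtain ⟨hE₁, hF₁, hB₁⟩ := h₁
  obtain ⟨hE₂, hF₂, hB₂⟩ := h₂
  have hF := hermForm_errF_add_le_fromCols hA₁ hA₂
  refine ⟨errE_fromCols A₁ A₂ ▸ hE₁.add hE₂, ?_, fun x y => ?_⟩
  · refine PosSemidef.of_dotProduct_mulVec_nonneg (errF_isHermitian _) fun x => ?_
    have h₁ := hF₁.dotProduct_mulVec_nonneg (x ∘ Sum.inl)
    have h₂ := hF₂.dotProduct_mulVec_nonneg (x ∘ Sum.inr)
    simp only [star_trivial, dotProduct_mulVec_eq_hermForm] at h₁ h₂ ⊢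
    exact (add_nonneg h₁ h₂).trans (hF fun j => (x j : ℂ))
  · have hsub : fromCols Atil₁ Atil₂ - fromCols A₁ A₂ = fromCols (Atil₁ - A₁) (Atil₂ - A₂) := by
      ext i (j | j) <;> rfl
    rw [hsub, fromCols_map, fromCols_mulVec, dotProduct_add]
    change _ ≤ ε / 4 * (hermForm (errE _) x + hermForm (errF _) y)
    rw [errE_fromCols, hermForm_add]
    calc _ ≤ _ := norm_add_le _ _
      _ ≤ ε / 4 * (hermForm (errE A₁) x + hermForm (errF A₁) (y ∘ Sum.inl)) +
          ε / 4 * (hermForm (errE A₂) x + hermForm (errF A₂) (y ∘ Sum.inr)) :=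
        add_le_add (hB₁ _ _) (hB₂ _ _)
      _ ≤ _ := by
        rw [← mul_add]
        exact mul_le_mul_of_nonneg_left (by linarith [hF y]) (by positivity)

/-- SV approximation of nonnegative matrices is preserved under horizontal
concatenation. -/
theorem stmt_14 {m n : ℕ} (A₁ A₂ Atil₁ Atil₂ : Matrix (Fin m) (Fin n) ℝ)
    (hA₁ : ∀ i j, 0 ≤ A₁ i j) (hA₂ : ∀ i j, 0 ≤ A₂ i j)
    (hAtil₁ : ∀ i j, 0 ≤ Atil₁ i j) (hAtil₂ : ∀ i j, 0 ≤ Atil₂ i j)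
    (ε : ℝ) (hε : 0 ≤ ε)
    (h₁ : IsSVgApprox ε A₁ Atil₁) (h₂ : IsSVgApprox ε A₂ Atil₂) :
    IsSVgApprox ε (Matrix.fromCols A₁ A₂) (Matrix.fromCols Atil₁ Atil₂) :=
  stmt_14_general A₁ A₂ Atil₁ Atil₂ hA₁ hA₂ ε hε h₁ h₂
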